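/- Let A ∈ ℝ^{n×d} have rank k, with compact SVD A = UΣVᵀ (UᵀU = VᵀV = I_k, Σ invertible diagonal with largest entry σ₁ and smallest entry σ_k), and let A† = VΣ⁻¹Uᵀ. If F : ℝ^d → ℝ^d is L-Lipschitz and S ∈ ℝ^{m×n} is any matrix, then for all v with ‖v‖ ≤ r: ‖F(A†SᵀSAv) - F(A†Av)‖ ≤ L·r·(σ₁/σ_k)·‖Uᵀ(SᵀS - I)U‖. -/

import Mathlib

open Matrix
open scoped Matrix.Norms.L2Operator

lemma l2_opNorm_diagonal_le (k : ℕ) (σ : Fin k → ℝ) (c : ℝ) (hc : 0 ≤ c)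
    (h : ∀ i, |σ i| ≤ c) : ‖(diagonal σ : Matrix (Fin k) (Fin k) ℝ)‖ ≤ c := by
  rw [Matrix.l2_opNorm_def]
  apply ContinuousLinearMap.opNorm_le_bound _ hc
  intro x
  have hx : (LinearEquiv.trans Matrix.toEuclideanLin LinearMap.toContinuousLinearMap
      (diagonal σ)) x = Matrix.toEuclideanLin (diagonal σ) x := rfl
  rw [hx]
  rw [EuclideanSpace.norm_eq, EuclideanSpace.norm_eq]
  have h1 : ∀ i : Fin k, ‖(Matrix.toEuclideanLin (diagonal σ) x) i‖ ^ 2 ≤ c ^ 2 * ‖x i‖ ^ 2 := by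
    intro i
    have : (Matrix.toEuclideanLin (diagonal σ) x) i = σ i * x i := by
      rw [Matrix.toEuclideanLin_apply]
      simp [Matrix.mulVec_diagonal]
    rw [this]
    have := h i
    have hxi : |σ i| * |x i| ≤ c * |x i| := by
      exact mul_le_mul_of_nonneg_right this (abs_nonneg _)
    simp only [Real.norm_eq_abs]
    rw [abs_mul, mul_pow]
    exact mul_le_mul_of_nonneg_right (pow_le_pow_left₀ (abs_nonneg _) this 2) (sq_nonneg _)
  calc Real.sqrt (∑ i, ‖(Matrix.toEuclideanLin (diagonal σ) x) i‖ ^ 2)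
      ≤ Real.sqrt (∑ i, c ^ 2 * ‖x i‖ ^ 2) :=
        Real.sqrt_le_sqrt (Finset.sum_le_sum fun i _ => h1 i)
    _ = c * Real.sqrt (∑ i, ‖x i‖ ^ 2) := by
        rw [← Finset.mul_sum, Real.sqrt_mul (sq_nonneg c), Real.sqrt_sq hc]

lemma l2_opNorm_orthonormal_cols_le {a b : ℕ} (W : Matrix (Fin a) (Fin b) ℝ)
    (hW : Wᵀ * W = 1) : ‖W‖ ≤ 1 := by
  have h1 : ‖Wᴴ * W‖ = ‖W‖ * ‖W‖ := Matrix.l2_opNorm_conjTranspose_mul_self W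
  rw [Matrix.conjTranspose_eq_transpose_of_trivial, hW] at h1
  have h2 : ‖(1 : Matrix (Fin b) (Fin b) ℝ)‖ ≤ 1 := by
    rw [← Matrix.diagonal_one]
    exact l2_opNorm_diagonal_le b 1 1 zero_le_one (by simp)
  nlinarith [norm_nonneg W]

lemma toEuclideanLin_le {a b : ℕ} (M : Matrix (Fin a) (Fin b) ℝ) (x : EuclideanSpace ℝ (Fin b)) :
    ‖Matrix.toEuclideanLin M x‖ ≤ ‖M‖ * ‖x‖ :=
  ((Matrix.toEuclideanLin.trans LinearMap.toContinuousLinearMap) M).le_opNorm x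

/-- low-rank refinement of the sketched EI bound. With `A = U Σ Vᵀ` a compact
SVD, `A† = V Σ⁻¹ Uᵀ`, `F` `L`-Lipschitz, and the sketched composition `A† Sᵀ S A`, one has
`‖F(A† Sᵀ S A v) - F(A† A v)‖ ≤ L r (σ₁/σ_k) ‖Uᵀ(SᵀS - I)U‖` for all `‖v‖ ≤ r`. -/
theorem sketched_ei_low_rank_bound
    (n d k m : ℕ) (hk : 0 < k) (L r : ℝ) (hL : 0 ≤ L)
    (U : Matrix (Fin n) (Fin k) ℝ) (V : Matrix (Fin d) (Fin k) ℝ)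
    (σ : Fin k → ℝ)
    (hU : Uᵀ * U = 1) (hV : Vᵀ * V = 1)
    (hσpos : ∀ i, 0 < σ i) (hσmono : ∀ i j : Fin k, i ≤ j → σ j ≤ σ i)
    (A : Matrix (Fin n) (Fin d) ℝ) (hA : A = U * diagonal σ * Vᵀ)
    (Adag : Matrix (Fin d) (Fin n) ℝ)
    (hAdag : Adag = V * diagonal (fun i => (σ i)⁻¹) * Uᵀ)
    (F : EuclideanSpace ℝ (Fin d) → EuclideanSpace ℝ (Fin d))
    (hF : ∀ p q, ‖F p - F q‖ ≤ L * ‖p - q‖)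
    (S : Matrix (Fin m) (Fin n) ℝ)
    (v : EuclideanSpace ℝ (Fin d)) (hv : ‖v‖ ≤ r) :
    ‖F (Matrix.toEuclideanLin (Adag * (Sᵀ * S) * A) v) -
        F (Matrix.toEuclideanLin (Adag * A) v)‖ ≤
      L * r * (σ ⟨0, hk⟩ / σ ⟨k - 1, by omega⟩) * ‖Uᵀ * (Sᵀ * S - 1) * U‖ := by
  set σ1 : ℝ := σ ⟨0, hk⟩ with hσ1
  set σk : ℝ := σ ⟨k - 1, by omega⟩ with hσk
  set D : Matrix (Fin k) (Fin k) ℝ := diagonal σ with hD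
  set Di : Matrix (Fin k) (Fin k) ℝ := diagonal (fun i => (σ i)⁻¹) with hDi
  set E : Matrix (Fin k) (Fin k) ℝ := Uᵀ * (Sᵀ * S - 1) * U with hE
  have hr : 0 ≤ r := le_trans (norm_nonneg v) hv
  -- key matrix identity
  have hM : Adag * (Sᵀ * S) * A - Adag * A = V * Di * E * D * Vᵀ := by
    have hUU : ∀ X : Matrix (Fin k) (Fin d) ℝ, Uᵀ * (U * X) = X := by
      intro X; rw [← Matrix.mul_assoc, hU, Matrix.one_mul]
    rw [hA, hAdag, hE, hD, hDi]
    simp only [Matrix.mul_sub, Matrix.sub_mul, Matrix.mul_one, Matrix.one_mul, Matrix.mul_assoc,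
      hUU]
  -- norm of the difference vector
  have hdiff : Matrix.toEuclideanLin (Adag * (Sᵀ * S) * A) v -
      Matrix.toEuclideanLin (Adag * A) v = Matrix.toEuclideanLin (V * Di * E * D * Vᵀ) v := by
    rw [← hM, map_sub, LinearMap.sub_apply]
  -- diagonal norm bounds
  have hσ1pos := hσpos ⟨0, hk⟩
  have hσkpos := hσpos ⟨k - 1, by omega⟩
  have hDle : ‖D‖ ≤ σ1 := by
    apply l2_opNorm_diagonal_le _ _ _ hσ1pos.le
    intro i
    rw [abs_of_pos (hσpos i)]
    exact hσmono ⟨0, hk⟩ i (by simp [Fin.le_def])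
  have hDile : ‖Di‖ ≤ σk⁻¹ := by
    apply l2_opNorm_diagonal_le _ _ _ (inv_nonneg.mpr hσkpos.le)
    intro i
    rw [abs_of_pos (inv_pos.mpr (hσpos i))]
    exact inv_anti₀ hσkpos (hσmono i ⟨k - 1, by omega⟩ (by
      simp [Fin.le_def]; omega))
  have hVle : ‖V‖ ≤ 1 := l2_opNorm_orthonormal_cols_le V hV
  have hVtle : ‖Vᵀ‖ ≤ 1 := by
    rw [← Matrix.conjTranspose_eq_transpose_of_trivial, Matrix.l2_opNorm_conjTranspose]
    exact hVle
  -- product bound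
  have hMnorm : ‖V * Di * E * D * Vᵀ‖ ≤ σ1 / σk * ‖E‖ := by
    have h1 : ‖V * Di * E * D * Vᵀ‖ ≤ ‖V‖ * ‖Di‖ * ‖E‖ * ‖D‖ * ‖Vᵀ‖ := by
      calc ‖V * Di * E * D * Vᵀ‖ ≤ ‖V * Di * E * D‖ * ‖Vᵀ‖ := Matrix.l2_opNorm_mul _ _
        _ ≤ (‖V * Di * E‖ * ‖D‖) * ‖Vᵀ‖ :=
            mul_le_mul_of_nonneg_right (Matrix.l2_opNorm_mul _ _) (norm_nonneg _)
        _ ≤ ((‖V * Di‖ * ‖E‖) * ‖D‖) * ‖Vᵀ‖ :=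
            mul_le_mul_of_nonneg_right (mul_le_mul_of_nonneg_right
              (Matrix.l2_opNorm_mul _ _) (norm_nonneg _)) (norm_nonneg _)
        _ ≤ (((‖V‖ * ‖Di‖) * ‖E‖) * ‖D‖) * ‖Vᵀ‖ :=
            mul_le_mul_of_nonneg_right (mul_le_mul_of_nonneg_right
              (mul_le_mul_of_nonneg_right (Matrix.l2_opNorm_mul _ _) (norm_nonneg _))
              (norm_nonneg _)) (norm_nonneg _)
    rw [div_eq_mul_inv]
    calc ‖V * Di * E * D * Vᵀ‖ ≤ ‖V‖ * ‖Di‖ * ‖E‖ * ‖D‖ * ‖Vᵀ‖ := h1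
      _ ≤ 1 * σk⁻¹ * ‖E‖ * σ1 * 1 := by
          gcongr
      _ = σ1 * σk⁻¹ * ‖E‖ := by ring
  calc ‖F (Matrix.toEuclideanLin (Adag * (Sᵀ * S) * A) v) -
        F (Matrix.toEuclideanLin (Adag * A) v)‖
      ≤ L * ‖Matrix.toEuclideanLin (Adag * (Sᵀ * S) * A) v -
          Matrix.toEuclideanLin (Adag * A) v‖ := hF _ _
    _ = L * ‖Matrix.toEuclideanLin (V * Di * E * D * Vᵀ) v‖ := by rw [hdiff]
    _ ≤ L * (‖V * Di * E * D * Vᵀ‖ * ‖v‖) := by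
        gcongr
        exact toEuclideanLin_le _ _
    _ ≤ L * ((σ1 / σk * ‖E‖) * r) := by
        have hEnn : 0 ≤ ‖E‖ := norm_nonneg _
        have hMnn : 0 ≤ ‖V * Di * E * D * Vᵀ‖ := norm_nonneg _
        have hvnn : 0 ≤ ‖v‖ := norm_nonneg _
        apply mul_le_mul_of_nonneg_left _ hL
        have h2 : ‖V * Di * E * D * Vᵀ‖ * ‖v‖ ≤ (σ1 / σk * ‖E‖) * ‖v‖ :=
          mul_le_mul_of_nonneg_right hMnorm hvnn
        refine h2.trans (mul_le_mul_of_nonneg_left hv ?_)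
        positivity
    _ = L * r * (σ1 / σk) * ‖E‖ := by ring
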